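/- Let m be a natural number and let X ⊆ FreeGroup ℕ be a set definable in the L_grp-structure FreeGroup ℕ with a parameter tuple all of whose entries lie in the subgroup generated by the generators FreeGroup.of 0, …, FreeGroup.of m. Then either FreeGroup.of j ∈ X for all j > m, or FreeGroup.of j ∉ X for all j > m. -/
import Mathlib


open FirstOrder

/-- Function symbols of the first-order language of groups: a binary multiplication,
a unary inversion, and a constant for the identity. -/
inductive GrpFunc : ℕ → Type
  | mul : GrpFunc 2
  | inv : GrpFunc 1
  | one : GrpFunc 0

/-- The first-order language of groups. -/
def Lgrp : FirstOrder.Language :=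
  ⟨GrpFunc, fun _ => Empty⟩

/-- Every group is an `Lgrp`-structure in the natural way. -/
instance (G : Type*) [Group G] : Lgrp.Structure G where
  funMap {_} f args :=
    match f with
    | .mul => args 0 * args 1
    | .inv => (args 0)⁻¹
    | .one => 1
  RelMap {_} r _ := r.elim

/-- A group isomorphism is an `Lgrp`-equivalence. -/
def mulEquivToLgrpEquiv {G H : Type*} [Group G] [Group H] (e : G ≃* H) :
    Lgrp.Equiv G H where
  toEquiv := e.toEquiv
  map_fun' {n} f x := by
    cases f with
    | mul => exact map_mul e _ _
    | inv => exact map_inv e _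
    | one => exact map_one e
  map_rel' {n} r := r.elim

/-- Poizat's observation (Section 7 of the paper): the free generators form an
indiscernible set, so any subset of `FreeGroup ℕ` definable with parameters lying in
the subgroup generated by the first `m + 1` generators contains either all or none of
the remaining generators. -/
theorem freeGroup_definable_fin_or_cofin_on_generators (m : ℕ)
    (k : ℕ) (φ : Lgrp.Formula (Fin 1 ⊕ Fin k)) (c : Fin k → FreeGroup ℕ)
    (hc : ∀ i, c i ∈ Subgroup.closure {x : FreeGroup ℕ | ∃ j ≤ m, x = FreeGroup.of j})
    (X : Set (FreeGroup ℕ))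
    (hX : X = {a : FreeGroup ℕ | φ.Realize (Sum.elim (fun _ => a) c)}) :
    (∀ j : ℕ, m < j → FreeGroup.of j ∈ X) ∨ (∀ j : ℕ, m < j → FreeGroup.of j ∉ X) := by
  -- key : membership of of j in X is equivalent to membership of of (m+1)
  have key : ∀ j : ℕ, m < j → (FreeGroup.of j ∈ X ↔ FreeGroup.of (m + 1) ∈ X) := by
    intro j hj
    set e : FreeGroup ℕ ≃* FreeGroup ℕ := FreeGroup.freeGroupCongr (Equiv.swap (m + 1) j)
    have hfix : ∀ i, e (c i) = c i := by
      intro i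
      refine Subgroup.closure_induction ?_ (map_one e) ?_ ?_ (hc i)
      · rintro x ⟨l, hl, rfl⟩
        simp only [e, FreeGroup.freeGroupCongr_apply, FreeGroup.map.of]
        rw [Equiv.swap_apply_of_ne_of_ne (by omega) (by omega)]
      · intro x y _ _ hx hy; rw [map_mul, hx, hy]
      · intro x _ hx; rw [map_inv, hx]
    have he : e (FreeGroup.of (m + 1)) = FreeGroup.of j := by
      simp [e, Equiv.swap_apply_left]
    have := FirstOrder.Language.StrongHomClass.realize_formula (mulEquivToLgrpEquiv e) φ
      (v := Sum.elim (fun _ => FreeGroup.of (m + 1)) c)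
    rw [hX]
    simp only [Set.mem_setOf_eq]
    rw [← this]
    constructor
    · intro h
      convert h using 2
      funext x
      cases x with
      | inl _ => exact he
      | inr i => exact hfix i
    · intro h
      convert h using 2
      funext x
      cases x with
      | inl _ => exact he.symm
      | inr i => exact (hfix i).symm
  by_cases h : FreeGroup.of (m + 1) ∈ X
  · exact Or.inl fun j hj => (key j hj).2 h
  · exact Or.inr fun j hj hjX => h ((key j hj).1 hjX)
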